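/- Let Φ ∈ ℝ^{m×N} satisfy the Restricted Isometry Property with constant δ_k for sparsity k. Let Γ♯ ⊆ {1,…,N} with |Γ♯| ≤ k, let I ⊆ Γ♯ be nonempty, and let r ∈ ℝ^m be a nonzero vector in the column span of Φ_{Γ♯} such that ‖Φ_I* r‖_∞ = ‖Φ* r‖_∞ (i.e., I contains an index maximizing |⟨φ_i, r⟩|). Define the matching pursuit step r' = r − Φ_I Φ_I* r. Then ‖r'‖₂² ≤ (1 − (1−δ_k)²/k) · ‖r‖₂². -/

import Mathlib

open scoped BigOperators
open Matrix

/-- The Euclidean (ℓ²) norm of a finitely-indexed real vector. -/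
noncomputable def l2 {ι : Type*} [Fintype ι] (x : ι → ℝ) : ℝ :=
  Real.sqrt (∑ i, x i ^ 2)

/-- The supremum (ℓ∞) norm of a finitely-indexed real vector. -/
noncomputable def linf {ι : Type*} [Fintype ι] (x : ι → ℝ) : ℝ :=
  ⨆ i, |x i|

/-- The Euclidean inner product. -/
def dot {ι : Type*} [Fintype ι] (x y : ι → ℝ) : ℝ := ∑ i, x i * y i

/-- A vector is `k`-sparse if it has at most `k` nonzero entries. -/
def Sparse {N : ℕ} (k : ℕ) (x : Fin N → ℝ) : Prop :=
  ∃ Γ : Finset (Fin N), Γ.card ≤ k ∧ ∀ i ∉ Γ, x i = 0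

/-- `Φ` satisfies the Restricted Isometry Property with constant `δ ∈ (0,1)` for sparsity `k`. -/
def RIP {m N : ℕ} (Φ : Matrix (Fin m) (Fin N) ℝ) (k : ℕ) (δ : ℝ) : Prop :=
  0 < δ ∧ δ < 1 ∧
    ∀ x : Fin N → ℝ, Sparse k x →
      (1 - δ) * l2 x ^ 2 ≤ l2 (Φ.mulVec x) ^ 2 ∧
      l2 (Φ.mulVec x) ^ 2 ≤ (1 + δ) * l2 x ^ 2

/-- The column submatrix `Φ_Γ` of `Φ` formed by the columns indexed by `Γ`. -/
def colSub {m N : ℕ} (Φ : Matrix (Fin m) (Fin N) ℝ) (Γ : Finset (Fin N)) :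
    Matrix (Fin m) (↥Γ) ℝ := fun i j => Φ i j.1

/-!
Write `c = Φ_I* r`. Expanding `‖r - Φ_I c‖²` and bounding `‖Φ_I c‖²` by the upper RIP inequality
gives `‖r'‖² ≤ ‖r‖² - (1 - δ) ‖c‖²`. For the lower bound on `‖c‖²` write `r = Φ_Γ w`: then
`‖r‖² = ⟨Φ_Γ* r, w⟩`, so Cauchy–Schwarz and the lower RIP inequality give `(1 - δ) ‖r‖² ≤ ‖Φ_Γ* r‖²`,
and `‖Φ_Γ* r‖² ≤ k ‖Φ* r‖∞² = k ‖c‖∞² ≤ k ‖c‖²` because `I` attains the maximal correlation.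
-/

section Norms

variable {ι κ : Type*} [Fintype ι] [Fintype κ]

lemma l2_sq (x : ι → ℝ) : l2 x ^ 2 = x ⬝ᵥ x := by
  rw [l2, Real.sq_sqrt (by positivity)]
  simp only [dotProduct, sq]

lemma abs_le_l2 (x : ι → ℝ) (i : ι) : |x i| ≤ l2 x := by
  rw [← Real.sqrt_sq_eq_abs]
  exact Real.sqrt_le_sqrt (Finset.single_le_sum (fun j _ => sq_nonneg (x j)) (Finset.mem_univ i))

lemma abs_le_linf (x : ι → ℝ) (i : ι) : |x i| ≤ linf x :=
  le_ciSup (f := fun i => |x i|) (Set.finite_range _).bddAbove i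

lemma linf_nonneg (x : ι → ℝ) : 0 ≤ linf x :=
  Real.iSup_nonneg fun i => abs_nonneg (x i)

lemma linf_comp_le (x : ι → ℝ) (f : κ → ι) : linf (x ∘ f) ≤ linf x :=
  Real.iSup_le (fun j => abs_le_linf x (f j)) (linf_nonneg x)

lemma linf_le_l2 (x : ι → ℝ) : linf x ≤ l2 x :=
  Real.iSup_le (abs_le_l2 x) (Real.sqrt_nonneg _)

lemma l2_sq_le_card_mul_linf_sq (x : ι → ℝ) : l2 x ^ 2 ≤ Fintype.card ι * linf x ^ 2 := by
  have h := Finset.sum_le_card_nsmul Finset.univ (fun i => x i * x i) (linf x ^ 2) fun i _ => by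
    rw [← abs_mul_abs_self, ← sq]
    exact pow_le_pow_left₀ (abs_nonneg _) (abs_le_linf x i) 2
  rw [l2_sq]
  rwa [nsmul_eq_mul, Finset.card_univ] at h

end Norms

section TransposeBounds

variable {μ κ : Type*} [Fintype μ] [Fintype κ]

lemma l2_sub_mulVec_transpose_mulVec_sq (A : Matrix μ κ ℝ) (r : μ → ℝ) :
    l2 (r - A *ᵥ (Aᵀ *ᵥ r)) ^ 2 = l2 r ^ 2 - 2 * l2 (Aᵀ *ᵥ r) ^ 2 + l2 (A *ᵥ (Aᵀ *ᵥ r)) ^ 2 := by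
  have hdual : r ⬝ᵥ A *ᵥ (Aᵀ *ᵥ r) = (Aᵀ *ᵥ r) ⬝ᵥ (Aᵀ *ᵥ r) := by
    rw [dotProduct_mulVec, ← mulVec_transpose]
  simp only [l2_sq, sub_dotProduct, dotProduct_sub, dotProduct_comm _ r, hdual]
  ring

lemma mul_l2_sq_le_l2_transpose_mulVec_sq (A : Matrix μ κ ℝ) (w : κ → ℝ) {a : ℝ} (ha : 0 ≤ a)
    (hw : a * l2 w ^ 2 ≤ l2 (A *ᵥ w) ^ 2) :
    a * l2 (A *ᵥ w) ^ 2 ≤ l2 (Aᵀ *ᵥ (A *ᵥ w)) ^ 2 := by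
  set r := A *ᵥ w
  set v := Aᵀ *ᵥ r
  have hrv : l2 r ^ 2 = v ⬝ᵥ w := by
    rw [l2_sq, dotProduct_mulVec, ← mulVec_transpose]
  have hcs : (v ⬝ᵥ w) ^ 2 ≤ l2 v ^ 2 * l2 w ^ 2 := by
    rw [l2_sq, l2_sq]
    simpa only [dotProduct, sq] using Finset.sum_mul_sq_le_sq_mul_sq Finset.univ v w
  rcases (sq_nonneg (l2 r)).eq_or_lt with hr | hr
  · rw [← hr, mul_zero]
    positivity
  · refine le_of_mul_le_mul_left ?_ hr
    calc l2 r ^ 2 * (a * l2 r ^ 2) = a * (v ⬝ᵥ w) ^ 2 := by rw [hrv]; ring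
      _ ≤ a * (l2 v ^ 2 * l2 w ^ 2) := mul_le_mul_of_nonneg_left hcs ha
      _ = l2 v ^ 2 * (a * l2 w ^ 2) := by ring
      _ ≤ l2 v ^ 2 * l2 r ^ 2 := mul_le_mul_of_nonneg_left hw (sq_nonneg _)
      _ = l2 r ^ 2 * l2 v ^ 2 := mul_comm _ _

end TransposeBounds

section ZeroExtension

variable {ι : Type*} [Fintype ι] [DecidableEq ι]

def extendByZero (Γ : Finset ι) (w : Γ → ℝ) (i : ι) : ℝ :=
  if h : i ∈ Γ then w ⟨i, h⟩ else 0

lemma sum_extendByZero (Γ : Finset ι) (w : Γ → ℝ) (g : ι → ℝ → ℝ) (hg : ∀ i, g i 0 = 0) :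
    ∑ i, g i (extendByZero Γ w i) = ∑ j : Γ, g j (w j) := by
  rw [← Finset.sum_subset Γ.subset_univ fun i _ hi => by simp [extendByZero, hi, hg],
    ← Finset.sum_coe_sort]
  simp [extendByZero]

lemma l2_extendByZero (Γ : Finset ι) (w : Γ → ℝ) : l2 (extendByZero Γ w) = l2 w := by
  rw [l2, l2, sum_extendByZero Γ w (fun _ t => t ^ 2) fun _ => zero_pow two_ne_zero]

lemma mulVec_extendByZero {m : Type*} (Φ : Matrix m ι ℝ) (Γ : Finset ι) (w : Γ → ℝ) :
    Φ *ᵥ extendByZero Γ w = Φ.submatrix id Subtype.val *ᵥ w := by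
  ext i
  exact sum_extendByZero Γ w (fun j t => Φ i j * t) fun _ => mul_zero _

end ZeroExtension

namespace RIP

variable {m N k : ℕ} {Φ : Matrix (Fin m) (Fin N) ℝ} {δ : ℝ}

lemma bounds_colSub (h : RIP Φ k δ) {Γ : Finset (Fin N)} (hΓ : Γ.card ≤ k) (w : Γ → ℝ) :
    (1 - δ) * l2 w ^ 2 ≤ l2 (colSub Φ Γ *ᵥ w) ^ 2 ∧
      l2 (colSub Φ Γ *ᵥ w) ^ 2 ≤ (1 + δ) * l2 w ^ 2 := by
  have := h.2.2 (extendByZero Γ w) ⟨Γ, hΓ, fun i hi => dif_neg hi⟩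
  rwa [l2_extendByZero, mulVec_extendByZero] at this

lemma l2_mpStep_sq_le (h : RIP Φ k δ) {I : Finset (Fin N)} (hI : I.card ≤ k) (r : Fin m → ℝ) :
    l2 (r - colSub Φ I *ᵥ ((colSub Φ I)ᵀ *ᵥ r)) ^ 2 ≤
      l2 r ^ 2 - (1 - δ) * l2 ((colSub Φ I)ᵀ *ᵥ r) ^ 2 := by
  rw [l2_sub_mulVec_transpose_mulVec_sq]
  linarith [(h.bounds_colSub hI ((colSub Φ I)ᵀ *ᵥ r)).2]

lemma one_sub_mul_l2_sq_le_of_linf_eq (h : RIP Φ k δ) {Γ I : Finset (Fin N)} (hΓ : Γ.card ≤ k)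
    (w : Γ → ℝ) (hmax : linf ((colSub Φ I)ᵀ *ᵥ (colSub Φ Γ *ᵥ w)) =
      linf (Φᵀ *ᵥ (colSub Φ Γ *ᵥ w))) :
    (1 - δ) * l2 (colSub Φ Γ *ᵥ w) ^ 2 ≤ k * l2 ((colSub Φ I)ᵀ *ᵥ (colSub Φ Γ *ᵥ w)) ^ 2 := by
  set r := colSub Φ Γ *ᵥ w
  calc (1 - δ) * l2 r ^ 2 ≤ l2 ((colSub Φ Γ)ᵀ *ᵥ r) ^ 2 :=
        mul_l2_sq_le_l2_transpose_mulVec_sq _ w (by linarith [h.2.1]) (h.bounds_colSub hΓ w).1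
    _ ≤ Γ.card * linf ((colSub Φ Γ)ᵀ *ᵥ r) ^ 2 := by
        simpa using l2_sq_le_card_mul_linf_sq ((colSub Φ Γ)ᵀ *ᵥ r)
    _ ≤ k * linf (Φᵀ *ᵥ r) ^ 2 := by
        gcongr
        exacts [linf_nonneg _, linf_comp_le (Φᵀ *ᵥ r) Subtype.val]
    _ = k * linf ((colSub Φ I)ᵀ *ᵥ r) ^ 2 := by rw [hmax]
    _ ≤ k * l2 ((colSub Φ I)ᵀ *ᵥ r) ^ 2 := by
        gcongr
        · exact linf_nonneg _
        · exact linf_le_l2 _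

end RIP

theorem stmt12_general {m N : ℕ} (Φ : Matrix (Fin m) (Fin N) ℝ) (k : ℕ) (δ : ℝ)
    (hRIP : RIP Φ k δ) (Γs I : Finset (Fin N)) (hΓs : Γs.card ≤ k)
    (hsub : I ⊆ Γs)
    (r : Fin m → ℝ)
    (hr : ∃ w : ↥Γs → ℝ, r = (colSub Φ Γs).mulVec w)
    (hmax : linf ((colSub Φ I)ᵀ.mulVec r) = linf (Φᵀ.mulVec r))
    (r' : Fin m → ℝ) (hr' : r' = r - (colSub Φ I).mulVec ((colSub Φ I)ᵀ.mulVec r)) :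
    l2 r' ^ 2 ≤ (1 - (1 - δ) ^ 2 / k) * l2 r ^ 2 := by
  obtain ⟨w, rfl⟩ := hr
  subst hr'
  set c := (colSub Φ I)ᵀ *ᵥ (colSub Φ Γs *ᵥ w)
  have hstep := hRIP.l2_mpStep_sq_le ((Finset.card_le_card hsub).trans hΓs) (colSub Φ Γs *ᵥ w)
  have hgreedy := hRIP.one_sub_mul_l2_sq_le_of_linf_eq hΓs w hmax
  have hshare : (1 - δ) ^ 2 / k * l2 (colSub Φ Γs *ᵥ w) ^ 2 ≤ (1 - δ) * l2 c ^ 2 := by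
    have hδ : 0 < 1 - δ := sub_pos.mpr hRIP.2.1
    rcases k.eq_zero_or_pos with rfl | hk
    · simp only [Nat.cast_zero, div_zero, zero_mul]
      positivity
    · rw [div_mul_eq_mul_div, div_le_iff₀ (Nat.cast_pos.mpr hk)]
      nlinarith
  linarith

/-- one matching pursuit step `r' = r − Φ_I Φ_I* r` reduces the residual
energy by the factor `1 − (1−δ)²/k`, provided the selected set `I` is a nonempty subset of
the true support `Γ♯` (with `|Γ♯| ≤ k`), the residual `r ≠ 0` lies in the column span of
`Φ_{Γ♯}`, and `I` contains an index maximizing `|⟨φ_i, r⟩|`. -/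
theorem stmt12 {m N : ℕ} (Φ : Matrix (Fin m) (Fin N) ℝ) (k : ℕ) (δ : ℝ)
    (hRIP : RIP Φ k δ) (Γs I : Finset (Fin N)) (hΓs : Γs.card ≤ k)
    (hsub : I ⊆ Γs) (hne : I.Nonempty)
    (r : Fin m → ℝ) (hr0 : r ≠ 0)
    (hr : ∃ w : ↥Γs → ℝ, r = (colSub Φ Γs).mulVec w)
    (hmax : linf ((colSub Φ I)ᵀ.mulVec r) = linf (Φᵀ.mulVec r))
    (r' : Fin m → ℝ) (hr' : r' = r - (colSub Φ I).mulVec ((colSub Φ I)ᵀ.mulVec r)) :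
    l2 r' ^ 2 ≤ (1 - (1 - δ) ^ 2 / k) * l2 r ^ 2 :=
  stmt12_general Φ k δ hRIP Γs I hΓs hsub r hr hmax r' hr'
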